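/- arXiv:2409.01081 — 2 statements merged into one kernel-verified Lean document; each statement's English description precedes it below -/
import Mathlib

section
/- Let θ : ℕ → E and ξ : ℕ → E be sequences in a normed vector space, let β ∈ (0,1), suppose ξ_0 = θ_0 and ξ_t = β θ_t + (1-β) ξ_{t-1}, and assume ‖θ_{t+1} - θ_t‖ ≤ ε for all t ∈ ℕ. Then for all t, ‖ξ_t - θ_t‖ ≤ ((1-β)/β) · ε. -/
theorem ema_difference_bound
    {E : Type*} [NormedAddCommGroup E] [NormedSpace ℝ E]
    (θ ξ : ℕ → E) (β ε : ℝ) (hβ : β ∈ Set.Ioo (0:ℝ) 1)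
    (h0 : ξ 0 = θ 0)
    (hrec : ∀ t : ℕ, 1 ≤ t → ξ t = β • θ t + (1 - β) • ξ (t - 1))
    (hslow : ∀ t : ℕ, ‖θ (t + 1) - θ t‖ ≤ ε) :
    ∀ t : ℕ, ‖ξ t - θ t‖ ≤ ((1 - β) / β) * ε := by
  obtain ⟨hb0, hb1⟩ := hβ
  have hε : 0 ≤ ε := le_trans (norm_nonneg _) (hslow 0)
  have h1β : 0 ≤ 1 - β := by linarith
  intro t
  induction t with
  | zero => simp [h0]; positivity
  | succ t ih =>
    have hr := hrec (t + 1) (Nat.le_add_left 1 t)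
    simp only [Nat.add_sub_cancel] at hr
    have key : ξ (t + 1) - θ (t + 1) = (1 - β) • ((ξ t - θ t) - (θ (t + 1) - θ t)) := by
      rw [hr]; module
    rw [key, norm_smul, Real.norm_eq_abs, abs_of_nonneg h1β]
    have h2 : ‖(ξ t - θ t) - (θ (t + 1) - θ t)‖ ≤ (1 - β) / β * ε + ε :=
      le_trans (norm_sub_le _ _) (add_le_add ih (hslow t))
    calc (1 - β) * ‖(ξ t - θ t) - (θ (t + 1) - θ t)‖
        ≤ (1 - β) * ((1 - β) / β * ε + ε) := by
          exact mul_le_mul_of_nonneg_left h2 h1β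
      _ = (1 - β) / β * ε := by
          have hβne : β ≠ 0 := ne_of_gt hb0
          field_simp
          ring_nf
end

section
/- Let L : E → ℝ be differentiable with M-Lipschitz gradient, let θ, ξ ∈ E with ‖ξ - θ‖ ≤ ε, and suppose the loss discrepancy satisfies |L(θ) - L(ξ)| ≥ δ. Then the gradient norm is bounded below: ‖∇L(θ)‖ ≥ δ/ε - (M/2)·ε. -/
open InnerProductSpace

/-- Descent lemma: quadratic upper bound on the deviation from linearization. -/
lemma descent_aux
    {E : Type*} [NormedAddCommGroup E] [InnerProductSpace ℝ E] [CompleteSpace E]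
    (L : E → ℝ) (M : ℝ) (hM : 0 ≤ M)
    (hdiff : Differentiable ℝ L)
    (hLip : ∀ x y : E, ‖gradient L x - gradient L y‖ ≤ M * ‖x - y‖)
    (θ ξ : E) :
    |L ξ - L θ - @inner ℝ _ _ (gradient L θ) (ξ - θ)| ≤ M / 2 * ‖ξ - θ‖ ^ 2 := by
  set d := ξ - θ with hd
  set g : ℝ := @inner ℝ _ _ (gradient L θ) d with hg
  have hline : ∀ t : ℝ, HasDerivAt (fun t : ℝ => θ + t • d) d t := by
    intro t
    simpa using ((hasDerivAt_id t).smul_const d).const_add θ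
  have hL : ∀ t : ℝ, HasDerivAt (fun t : ℝ => L (θ + t • d))
      (@inner ℝ _ _ (gradient L (θ + t • d)) d) t := by
    intro t
    have h1 := ((hdiff (θ + t • d)).hasGradientAt.hasFDerivAt).comp_hasDerivAt t (hline t)
    simpa [toDual_apply_apply, Function.comp_def] using h1
  have key : ∀ (c : ℝ), c = 1 ∨ c = -1 →
      c * (L ξ - L θ) - c * g ≤ M / 2 * ‖d‖ ^ 2 := by
    intro c hc
    set φ : ℝ → ℝ := fun t => c * L (θ + t • d) - c * (t * g) - M / 2 * t ^ 2 * ‖d‖ ^ 2 with hφ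
    have hφd : ∀ t : ℝ, HasDerivAt φ
        (c * @inner ℝ _ _ (gradient L (θ + t • d)) d - c * g - M * t * ‖d‖ ^ 2) t := by
      intro t
      have := (((hL t).const_mul c).sub
        (((hasDerivAt_id t).mul_const g).const_mul c)).sub
        ((((hasDerivAt_id t).pow 2).const_mul (M / 2)).mul_const (‖d‖ ^ 2))
      convert this using 1
      · rfl
      · rfl
      · rfl
      simp only [id_eq]
      ring
    have hanti : AntitoneOn φ (Set.Icc 0 1) := by
      apply antitoneOn_of_deriv_nonpos (convex_Icc 0 1)
      · exact Continuous.continuousOn (by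
          have : Continuous φ := by
            have : Differentiable ℝ φ := fun t => (hφd t).differentiableAt
            exact this.continuous
          exact this)
      · intro t ht
        exact ((hφd t).differentiableAt).differentiableWithinAt
      · intro t ht
        rw [interior_Icc] at ht
        rw [(hφd t).deriv]
        have h1 : c * @inner ℝ _ _ (gradient L (θ + t • d)) d - c * g
            = @inner ℝ _ _ (c • (gradient L (θ + t • d) - gradient L θ)) d := by
          rw [hg]
          simp [inner_smul_left, inner_sub_left]
          ring
        have h2 : @inner ℝ _ _ (c • (gradient L (θ + t • d) - gradient L θ)) d
            ≤ ‖c • (gradient L (θ + t • d) - gradient L θ)‖ * ‖d‖ :=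
          real_inner_le_norm _ _
        have h3 : ‖c • (gradient L (θ + t • d) - gradient L θ)‖
            = ‖gradient L (θ + t • d) - gradient L θ‖ := by
          rcases hc with hc | hc <;> simp [hc, norm_smul, norm_sub_rev]
        have h4 : ‖gradient L (θ + t • d) - gradient L θ‖ ≤ M * (t * ‖d‖) := by
          have := hLip (θ + t • d) θ
          simpa [norm_smul, abs_of_pos ht.1, mul_assoc] using this
        have h5 : c * @inner ℝ _ _ (gradient L (θ + t • d)) d - c * g
            ≤ M * t * ‖d‖ ^ 2 := by
          rw [h1]
          calc @inner ℝ _ _ (c • (gradient L (θ + t • d) - gradient L θ)) d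
              ≤ ‖gradient L (θ + t • d) - gradient L θ‖ * ‖d‖ := by rw [← h3]; exact h2
            _ ≤ M * (t * ‖d‖) * ‖d‖ := by
                apply mul_le_mul_of_nonneg_right h4 (norm_nonneg _)
            _ = M * t * ‖d‖ ^ 2 := by ring
        linarith
    have h01 : φ 1 ≤ φ 0 := hanti (by norm_num) (by norm_num) zero_le_one
    have hφ0 : φ 0 = c * L θ := by simp [hφ]
    have hφ1 : φ 1 = c * L ξ - c * g - M / 2 * ‖d‖ ^ 2 := by
      simp [hφ, hd]
    rw [hφ0, hφ1] at h01
    linarith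
  have k1 := key 1 (Or.inl rfl)
  have k2 := key (-1) (Or.inr rfl)
  rw [abs_le]
  constructor <;> nlinarith [sq_nonneg ‖d‖]

theorem grand_lower_bound
    {E : Type*} [NormedAddCommGroup E] [InnerProductSpace ℝ E] [CompleteSpace E]
    (L : E → ℝ) (M ε δ : ℝ) (hM : 0 ≤ M) (hε : 0 < ε) (hδ : 0 ≤ δ)
    (hdiff : Differentiable ℝ L)
    (hLip : ∀ x y : E, ‖gradient L x - gradient L y‖ ≤ M * ‖x - y‖)
    (θ ξ : E) (hclose : ‖ξ - θ‖ ≤ ε)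
    (hgap : δ ≤ |L θ - L ξ|) :
    δ / ε - (M / 2) * ε ≤ ‖gradient L θ‖ := by
  have hdesc := descent_aux L M hM hdiff hLip θ ξ
  have hinner : |@inner ℝ _ _ (gradient L θ) (ξ - θ)| ≤ ‖gradient L θ‖ * ε := by
    calc |@inner ℝ _ _ (gradient L θ) (ξ - θ)| ≤ ‖gradient L θ‖ * ‖ξ - θ‖ :=
          abs_real_inner_le_norm _ _
      _ ≤ ‖gradient L θ‖ * ε := by
          exact mul_le_mul_of_nonneg_left hclose (norm_nonneg _)
  have hεsq : ‖ξ - θ‖ ^ 2 ≤ ε ^ 2 := by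
    have := norm_nonneg (ξ - θ)
    nlinarith
  have h1 : δ ≤ ‖gradient L θ‖ * ε + M / 2 * ε ^ 2 := by
    have habs : |L θ - L ξ| ≤ |@inner ℝ _ _ (gradient L θ) (ξ - θ)| + M / 2 * ‖ξ - θ‖ ^ 2 := by
      have := abs_sub_abs_le_abs_sub (L ξ - L θ) (@inner ℝ _ _ (gradient L θ) (ξ - θ))
      rw [abs_sub_comm] at this ⊢
      calc |L ξ - L θ| ≤ |@inner ℝ _ _ (gradient L θ) (ξ - θ)|
            + |L ξ - L θ - @inner ℝ _ _ (gradient L θ) (ξ - θ)| := by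
            have := abs_sub_abs_le_abs_sub (L ξ - L θ) (@inner ℝ _ _ (gradient L θ) (ξ - θ))
            linarith [abs_nonneg (L ξ - L θ - @inner ℝ _ _ (gradient L θ) (ξ - θ))]
        _ ≤ |@inner ℝ _ _ (gradient L θ) (ξ - θ)| + M / 2 * ‖ξ - θ‖ ^ 2 := by linarith
    have : M / 2 * ‖ξ - θ‖ ^ 2 ≤ M / 2 * ε ^ 2 := by nlinarith
    linarith
  rw [div_sub' (ne_of_gt hε), div_le_iff₀ hε]
  nlinarith
end
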